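/- arXiv:2412.13346 — 2 statements merged into one kernel-verified Lean document; each statement's English description precedes it below -/
import Mathlib

section
/- Let p, γ ∈ ℝⁿ be linearly independent. Then the minimum over unit vectors a ∈ Sⁿ⁻¹ of f(a) = ⟨p,a⟩/√(1+⟨γ,a⟩²) equals -√(pᵀ(I - γγᵀ/(1+|γ|²))p). -/
/-!
Put `B = I + γγᵀ`. On the unit sphere `1 + ⟨γ,a⟩² = aᵀBa`, and `A = B⁻¹` by Sherman–Morrison,
so with `u = Ap` we get `f(a) = ⟨u,a⟩_B / ‖a‖_B` for the inner product `⟨x,y⟩_B = xᵀBy`.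
Cauchy–Schwarz bounds this below by `-‖u‖_B = -√(pᵀAp)`, and the bound is attained at `a ∥ -u`.
-/

open Matrix

section
variable {ι R : Type*} [Fintype ι]

theorem dotProduct_self_nonneg [Ring R] [LinearOrder R] [IsStrictOrderedRing R] (v : ι → R) :
    0 ≤ v ⬝ᵥ v :=
  Finset.sum_nonneg fun i _ => mul_self_nonneg (v i)

theorem dotProduct_self_pos [Ring R] [LinearOrder R] [IsStrictOrderedRing R] {v : ι → R}
    (hv : v ≠ 0) : 0 < v ⬝ᵥ v :=
  (dotProduct_self_nonneg v).lt_of_ne' (mt dotProduct_self_eq_zero.mp hv)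

theorem one_add_vecMulVec_mul_one_sub {K : Type*} [Field K] [DecidableEq ι] (u v : ι → K)
    (h : 1 + v ⬝ᵥ u ≠ 0) :
    (1 + vecMulVec u v) * (1 - (1 / (1 + v ⬝ᵥ u)) • vecMulVec u v) = 1 := by
  have hsq : vecMulVec u v + vecMulVec u v * vecMulVec u v = (1 + v ⬝ᵥ u) • vecMulVec u v := by
    rw [vecMulVec_mul_vecMulVec, vecMulVec_smul, add_smul, one_smul]
  rw [mul_sub, mul_one, Matrix.mul_smul, add_mul, one_mul, hsq, smul_smul, one_div,
    inv_mul_cancel₀ h, one_smul, add_sub_cancel_right]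

theorem dotProduct_one_add_vecMulVec_mulVec [DecidableEq ι] (γ x y : ι → ℝ) :
    x ⬝ᵥ (1 + vecMulVec γ γ) *ᵥ y = x ⬝ᵥ y + (γ ⬝ᵥ x) * (γ ⬝ᵥ y) := by
  rw [add_mulVec, one_mulVec, vecMulVec_mulVec, dotProduct_add]
  simp [dotProduct_comm x γ, mul_comm]

/-- Cauchy–Schwarz for `⟨x,y⟩ + ⟨γ,x⟩⟨γ,y⟩`, the dot product of `(⟨γ,x⟩, x)` and `(⟨γ,y⟩, y)`. -/
theorem sq_dotProduct_add_mul_le (γ x y : ι → ℝ) :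
    (x ⬝ᵥ y + (γ ⬝ᵥ x) * (γ ⬝ᵥ y)) ^ 2 ≤
      (x ⬝ᵥ x + (γ ⬝ᵥ x) ^ 2) * (y ⬝ᵥ y + (γ ⬝ᵥ y) ^ 2) := by
  have := Finset.sum_mul_sq_le_sq_mul_sq Finset.univ (fun i : Option ι => i.elim (γ ⬝ᵥ x) x)
    (fun i => i.elim (γ ⬝ᵥ y) y)
  simpa [Fintype.sum_option, dotProduct, sq, add_comm] using this

theorem neg_sqrt_le_div_sqrt (γ u a : ι → ℝ) (ha : a ⬝ᵥ a = 1) :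
    -√(u ⬝ᵥ u + (γ ⬝ᵥ u) ^ 2) ≤ (u ⬝ᵥ a + (γ ⬝ᵥ u) * (γ ⬝ᵥ a)) / √(1 + (γ ⬝ᵥ a) ^ 2) := by
  have hcs := sq_dotProduct_add_mul_le γ u a
  rw [ha] at hcs
  rw [le_div_iff₀ (by positivity), neg_mul,
    ← Real.sqrt_mul (add_nonneg (dotProduct_self_nonneg u) (sq_nonneg _))]
  exact neg_le_of_abs_le (Real.abs_le_sqrt hcs)

theorem div_sqrt_eq_neg_sqrt (γ u : ι → ℝ) (hu : u ≠ 0) :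
    let a := -(√(u ⬝ᵥ u))⁻¹ • u
    a ⬝ᵥ a = 1 ∧
      (u ⬝ᵥ a + (γ ⬝ᵥ u) * (γ ⬝ᵥ a)) / √(1 + (γ ⬝ᵥ a) ^ 2) = -√(u ⬝ᵥ u + (γ ⬝ᵥ u) ^ 2) := by
  intro a
  simp only [a, smul_dotProduct, dotProduct_smul, smul_eq_mul]
  have huu := dotProduct_self_pos hu
  have hr2 : √(u ⬝ᵥ u) ^ 2 = u ⬝ᵥ u := Real.sq_sqrt huu.le
  set r := √(u ⬝ᵥ u)
  have hr : 0 < r := Real.sqrt_pos.mpr huu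
  set M := u ⬝ᵥ u + (γ ⬝ᵥ u) ^ 2
  have hM : 0 < M := by positivity
  constructor
  · field_simp
    linarith
  · have hden : 1 + (-r⁻¹ * (γ ⬝ᵥ u)) ^ 2 = M / r ^ 2 := by
      field_simp
      rw [hr2]
    have hnum : -r⁻¹ * u ⬝ᵥ u + γ ⬝ᵥ u * (-r⁻¹ * γ ⬝ᵥ u) = -(M / r) := by
      ring
    rw [hden, hnum, Real.sqrt_div hM.le, Real.sqrt_sq hr.le, neg_div,
      div_div_div_cancel_right₀ hr.ne', Real.div_sqrt]

theorem isLeast_div_sqrt (γ u : ι → ℝ) (hu : u ≠ 0) :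
    IsLeast ((fun a => (u ⬝ᵥ a + (γ ⬝ᵥ u) * (γ ⬝ᵥ a)) / √(1 + (γ ⬝ᵥ a) ^ 2)) ''
      {a | a ⬝ᵥ a = 1}) (-√(u ⬝ᵥ u + (γ ⬝ᵥ u) ^ 2)) := by
  obtain ⟨hunit, hval⟩ := div_sqrt_eq_neg_sqrt γ u hu
  refine ⟨⟨_, hunit, hval⟩, ?_⟩
  rintro _ ⟨a, ha, rfl⟩
  exact neg_sqrt_le_div_sqrt γ u a ha

end

/-- For linearly independent `p, γ ∈ ℝⁿ`, the minimum over unit vectors `a` of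
`f(a) = ⟨p,a⟩/√(1+⟨γ,a⟩²)` equals `-√(pᵀ(I - γγᵀ/(1+|γ|²))p)`. -/
theorem stmt4 (n : ℕ) (p γ : Fin n → ℝ)
    (hind : LinearIndependent ℝ ![p, γ])
    (A : Matrix (Fin n) (Fin n) ℝ)
    (hA : A = 1 - (1 / (1 + γ ⬝ᵥ γ)) • vecMulVec γ γ)
    (f : (Fin n → ℝ) → ℝ)
    (hf : ∀ a, f a = (p ⬝ᵥ a) / Real.sqrt (1 + (γ ⬝ᵥ a) ^ 2)) :
    IsLeast (f '' {a : Fin n → ℝ | a ⬝ᵥ a = 1})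
      (-Real.sqrt (p ⬝ᵥ A.mulVec p)) := by
  have hp : p ≠ 0 := by simpa using hind.ne_zero 0
  set u := A *ᵥ p
  have hBu : (1 + vecMulVec γ γ) *ᵥ u = p := by
    rw [mulVec_mulVec, hA, one_add_vecMulVec_mul_one_sub γ γ
      (by linarith [dotProduct_self_nonneg γ]), one_mulVec]
  have hpa : ∀ a, p ⬝ᵥ a = u ⬝ᵥ a + (γ ⬝ᵥ u) * (γ ⬝ᵥ a) := fun a => by
    rw [dotProduct_comm, ← hBu, dotProduct_one_add_vecMulVec_mulVec, dotProduct_comm, mul_comm]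
  have hu : u ≠ 0 := fun h => hp (by rw [← hBu, h, mulVec_zero])
  have hf' : f = fun a => (u ⬝ᵥ a + (γ ⬝ᵥ u) * (γ ⬝ᵥ a)) / √(1 + (γ ⬝ᵥ a) ^ 2) := by
    funext a
    rw [hf, hpa]
  rw [hf', hpa u, ← sq]
  exact isLeast_div_sqrt γ u hu
end

section
/- Let γ = ∇M(x) with H_M the Hessian of M. Then the norm of the gradient formula g = [(pᵀγ)²H_Mγ - (1+|γ|²)(pᵀγ)H_Mp]/[√(pᵀAp)(1+|γ|²)²] satisfies |g| ≤ 2|p|·‖H_M‖, where A = I - γγᵀ/(1+|γ|²). -/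
/-!
Write `c = |γ|`, `s = 1 + c²` and `r = √(pᵀAp)`. By Cauchy–Schwarz, `|pᵀγ| ≤ |p| c`, so the
numerator has norm at most `‖H_M‖ |p|² c (1 + 2c²)`, and `pᵀAp ≥ |p|²/s`, i.e. `|p| ≤ r √s`.
Hence `|g| ≤ ‖H_M‖ |p| · c √s (1 + 2c²) / s²`, and `c √s ≤ s`, `1 + 2c² ≤ 2s` give the factor 2.
-/

open scoped RealInnerProductSpace

section

variable {E F : Type*} [NormedAddCommGroup E] [InnerProductSpace ℝ E]
  [NormedAddCommGroup F] [NormedSpace ℝ F]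

/-- `pᵀAp ≥ |p|²/(1+|γ|²)` for `A = I - γγᵀ/(1+|γ|²)`, cleared of denominators. -/
lemma sq_norm_le_inner_sub_mul (p γ : E) :
    ‖p‖ ^ 2 ≤ (⟪p, p⟫ - ⟪p, γ⟫ ^ 2 / (1 + ‖γ‖ ^ 2)) * (1 + ‖γ‖ ^ 2) := by
  have hs : (0 : ℝ) < 1 + ‖γ‖ ^ 2 := by positivity
  have hcs : ⟪p, γ⟫ ^ 2 ≤ ‖p‖ ^ 2 * ‖γ‖ ^ 2 := by
    rw [← mul_pow, ← sq_abs]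
    exact pow_le_pow_left₀ (abs_nonneg _) (abs_real_inner_le_norm p γ) 2
  rw [sub_mul, div_mul_cancel₀ _ hs.ne', real_inner_self_eq_norm_sq]
  nlinarith

lemma norm_le_sqrt_inner_sub_mul_sqrt (p γ : E) :
    ‖p‖ ≤ √(⟪p, p⟫ - ⟪p, γ⟫ ^ 2 / (1 + ‖γ‖ ^ 2)) * √(1 + ‖γ‖ ^ 2) := by
  rw [← Real.sqrt_mul' _ (by positivity)]
  exact Real.le_sqrt_of_sq_le (sq_norm_le_inner_sub_mul p γ)

lemma norm_inner_sq_smul_sub_le (p γ : E) (H : E →L[ℝ] F) :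
    ‖⟪p, γ⟫ ^ 2 • H γ - ((1 + ‖γ‖ ^ 2) * ⟪p, γ⟫) • H p‖
      ≤ ‖H‖ * ‖p‖ ^ 2 * (‖γ‖ * (1 + 2 * ‖γ‖ ^ 2)) := by
  have ht : |⟪p, γ⟫| ≤ ‖p‖ * ‖γ‖ := abs_real_inner_le_norm p γ
  have ht2 : ⟪p, γ⟫ ^ 2 ≤ (‖p‖ * ‖γ‖) ^ 2 := by
    rw [← sq_abs]; exact pow_le_pow_left₀ (abs_nonneg _) ht 2
  calc ‖⟪p, γ⟫ ^ 2 • H γ - ((1 + ‖γ‖ ^ 2) * ⟪p, γ⟫) • H p‖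
      ≤ ⟪p, γ⟫ ^ 2 * ‖H γ‖ + (1 + ‖γ‖ ^ 2) * |⟪p, γ⟫| * ‖H p‖ := by
        refine (norm_sub_le _ _).trans_eq ?_
        rw [norm_smul, norm_smul, Real.norm_eq_abs, Real.norm_eq_abs, abs_sq, abs_mul,
          abs_of_pos (by positivity : (0 : ℝ) < 1 + ‖γ‖ ^ 2)]
    _ ≤ (‖p‖ * ‖γ‖) ^ 2 * (‖H‖ * ‖γ‖)
          + (1 + ‖γ‖ ^ 2) * (‖p‖ * ‖γ‖) * (‖H‖ * ‖p‖) := by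
        gcongr
        exacts [H.le_opNorm γ, H.le_opNorm p]
    _ = ‖H‖ * ‖p‖ ^ 2 * (‖γ‖ * (1 + 2 * ‖γ‖ ^ 2)) := by ring

end

lemma mul_sqrt_one_add_sq_mul_le (c : ℝ) :
    c * √(1 + c ^ 2) * (1 + 2 * c ^ 2) ≤ 2 * (1 + c ^ 2) ^ 2 := by
  have hs : 0 ≤ 1 + c ^ 2 := by positivity
  have hc : c ≤ √(1 + c ^ 2) := Real.le_sqrt_of_sq_le (by linarith)
  have hcs : c * √(1 + c ^ 2) ≤ 1 + c ^ 2 := by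
    calc c * √(1 + c ^ 2) ≤ √(1 + c ^ 2) * √(1 + c ^ 2) :=
          mul_le_mul_of_nonneg_right hc (Real.sqrt_nonneg _)
      _ = 1 + c ^ 2 := Real.mul_self_sqrt hs
  nlinarith

theorem stmt14_general (n : ℕ) (p γ : EuclideanSpace ℝ (Fin n))
    (HM : EuclideanSpace ℝ (Fin n) →L[ℝ] EuclideanSpace ℝ (Fin n))
    (g : EuclideanSpace ℝ (Fin n))
    (hg : g = (1 / (Real.sqrt (⟪p, p⟫ - ⟪p, γ⟫ ^ 2 / (1 + ‖γ‖ ^ 2)) *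
        (1 + ‖γ‖ ^ 2) ^ 2)) •
        ((⟪p, γ⟫ ^ 2) • HM γ - ((1 + ‖γ‖ ^ 2) * ⟪p, γ⟫) • HM p)) :
    ‖g‖ ≤ 2 * ‖p‖ * ‖HM‖ := by
  set r := √(⟪p, p⟫ - ⟪p, γ⟫ ^ 2 / (1 + ‖γ‖ ^ 2))
  set c := ‖γ‖
  have hnorm : ‖g‖ =
      ‖⟪p, γ⟫ ^ 2 • HM γ - ((1 + c ^ 2) * ⟪p, γ⟫) • HM p‖ / (r * (1 + c ^ 2) ^ 2) := by
    rw [hg, norm_smul, Real.norm_eq_abs, abs_of_nonneg (by positivity), one_div, inv_mul_eq_div]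
  rw [hnorm]
  refine div_le_of_le_mul₀ (by positivity) (by positivity) ?_
  calc _ ≤ ‖HM‖ * ‖p‖ ^ 2 * (c * (1 + 2 * c ^ 2)) := norm_inner_sq_smul_sub_le p γ HM
    _ ≤ ‖HM‖ * ‖p‖ * (r * √(1 + c ^ 2)) * (c * (1 + 2 * c ^ 2)) := by
        rw [sq, ← mul_assoc ‖HM‖]
        gcongr ‖HM‖ * ‖p‖ * ?_ * _
        exact norm_le_sqrt_inner_sub_mul_sqrt p γ
    _ = ‖HM‖ * ‖p‖ * r * (c * √(1 + c ^ 2) * (1 + 2 * c ^ 2)) := by ring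
    _ ≤ ‖HM‖ * ‖p‖ * r * (2 * (1 + c ^ 2) ^ 2) :=
        mul_le_mul_of_nonneg_left (mul_sqrt_one_add_sq_mul_le c) (by positivity)
    _ = 2 * ‖p‖ * ‖HM‖ * (r * (1 + c ^ 2) ^ 2) := by ring

/-- With `γ = ∇M(x)`, `A = I - γγᵀ/(1+|γ|²)` (so `pᵀAp = |p|² - ⟨p,γ⟩²/(1+|γ|²)`),
and `H_M` the (symmetric) Hessian, the gradient formula
`g = [(pᵀγ)²H_Mγ - (1+|γ|²)(pᵀγ)H_Mp]/[√(pᵀAp)(1+|γ|²)²]`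
satisfies `|g| ≤ 2|p|‖H_M‖`. -/
theorem stmt14 (n : ℕ) (p γ : EuclideanSpace ℝ (Fin n)) (hp : p ≠ 0)
    (HM : EuclideanSpace ℝ (Fin n) →L[ℝ] EuclideanSpace ℝ (Fin n))
    (hsymm : ∀ u w : EuclideanSpace ℝ (Fin n), ⟪HM u, w⟫ = ⟪u, HM w⟫)
    (g : EuclideanSpace ℝ (Fin n))
    (hg : g = (1 / (Real.sqrt (⟪p, p⟫ - ⟪p, γ⟫ ^ 2 / (1 + ‖γ‖ ^ 2)) *
        (1 + ‖γ‖ ^ 2) ^ 2)) •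
        ((⟪p, γ⟫ ^ 2) • HM γ - ((1 + ‖γ‖ ^ 2) * ⟪p, γ⟫) • HM p)) :
    ‖g‖ ≤ 2 * ‖p‖ * ‖HM‖ :=
  stmt14_general n p γ HM g hg
end
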